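/- arXiv:2410.02673 — 2 statements merged into one kernel-verified Lean document; each statement's English description precedes it below -/
import Mathlib

section
/- Let F: V → V be a linear operator on a normed space V with ‖F v‖ ≤ ‖v‖ for all v, and let D_N := Σ_{n=0}^{N} (I - F)ⁿ. Then for all u ∈ V, ‖D_N(F u)‖_* ≤ C(N) ‖u‖_*, where ‖·‖_* is a second seminorm on V satisfying ‖F v‖_* ≤ ‖v‖_* for all v ∈ V, and C(N) is defined recursively by C(0) = 1, C(N) = 1 + 2 C(N-1). -/
open Finset

/-- Seminorm stability of the van Cittert operator: if the filter `F` is stable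
with respect to both the norm and a second seminorm `p`, then
`p(D_N(F u)) ≤ C(N) p(u)` with `C(0) = 1`, `C(N) = 1 + 2 C(N-1)`. -/
theorem van_cittert_seminorm_bounded {V : Type*} [NormedAddCommGroup V]
    [NormedSpace ℝ V] (F : Module.End ℝ V) (p : Seminorm ℝ V)
    (hF : ∀ v, ‖F v‖ ≤ ‖v‖) (hFp : ∀ v, p (F v) ≤ p v)
    (C : ℕ → ℝ) (hC0 : C 0 = 1) (hCrec : ∀ n, C (n+1) = 1 + 2 * C n)
    (N : ℕ) (u : V) :
    p ((∑ n ∈ range (N+1), (1 - F)^n) (F u)) ≤ C N * p u := by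
  induction N with
  | zero =>
      simpa [hC0] using hFp u
  | succ N ih =>
      set D : Module.End ℝ V := ∑ n ∈ range (N+1), (1 - F)^n with hD
      have hsum : ∑ n ∈ range (N+2), (1 - F)^n = (1 - F) * D + 1 := by
        rw [hD, geom_sum_succ]
      have happly : (∑ n ∈ range (N+2), (1 - F)^n) (F u)
          = (D (F u) - F (D (F u))) + F u := by
        rw [hsum]
        simp [Module.End.mul_apply, LinearMap.sub_apply, Module.End.one_apply,
          LinearMap.add_apply]
      rw [happly]
      calc p ((D (F u) - F (D (F u))) + F u)
          ≤ p (D (F u) - F (D (F u))) + p (F u) := map_add_le_add p _ _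
        _ ≤ (p (D (F u)) + p (F (D (F u)))) + p (F u) := by
            gcongr; exact map_sub_le_add p _ _
        _ ≤ (C N * p u + C N * p u) + p u := by
            have h1 : p (F (D (F u))) ≤ C N * p u := (hFp _).trans ih
            have h2 : p (F u) ≤ p u := hFp u
            have := apply_nonneg p u; nlinarith
        _ = C (N+1) * p u := by rw [hCrec]; ring
end

section
/- Let (u^r_k)_{k=0}^{K} in a finite-dimensional subspace Xʳ ⊆ H¹₀ satisfy the BDF2 ADL-ROM scheme: for k = 1,...,K-1, (3u^r_{k+1} - 4u^r_k + u^r_{k-1}, vʳ)/(2Δt) + ν(∇u^r_{k+1}, ∇vʳ) + b*(D_N^r(F^r u^r_{k+1}), u^r_{k+1}, vʳ) = (f_{k+1}, vʳ) for all vʳ ∈ Xʳ, where b* is the skew-symmetric trilinear form satisfying b*(w, v, v) = 0. Then the unconditional stability bound ‖u^r_K‖² + 2νΔt Σ_{k=1}^{K-1} ‖∇u^r_{k+1}‖² ≤ ‖u^r_1‖² + ‖2u^r_1 - u^r_0‖² + 2ν⁻¹Δt Σ_{k=1}^{K-1} ‖f_{k+1}‖²_{-1} holds, where ‖·‖_{-1}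 is the dual norm with respect to ‖∇·‖. -/
/-!
Testing the scheme with `v = u (k+1)` kills the convection term by skew-symmetry. The BDF2
difference is then controlled by the G-stability identity
`⟪3x - 4y + z, x⟫ = ½ G(x, y) - ½ G(y, z) + ½ ‖x - 2y + z‖²` with `G(x, y) = ‖x‖² + ‖2x - y‖²`,
and Young's inequality absorbs half of the forcing into the viscous term. Summing the resulting
one-step estimates telescopes `G`.
-/

open RealInnerProductSpace Finset

theorem mul_le_half_mul_sq_add_sq_div {ν : ℝ} (hν : 0 < ν) (c s : ℝ) :
    c * s ≤ ν / 2 * s ^ 2 + c ^ 2 / (2 * ν) := by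
  have key : ν / 2 * s ^ 2 + c ^ 2 / (2 * ν) - c * s = (ν * s - c) ^ 2 / (2 * ν) := by
    field_simp
    ring
  have : 0 ≤ (ν * s - c) ^ 2 / (2 * ν) := by positivity
  linarith

section GStability

variable {H : Type*} [NormedAddCommGroup H] [InnerProductSpace ℝ H]

def bdf2GNormSq (x y : H) : ℝ := ‖x‖ ^ 2 + ‖(2 : ℝ) • x - y‖ ^ 2

theorem inner_bdf2_self_eq (x y z : H) :
    ⟪(3 : ℝ) • x - (4 : ℝ) • y + z, x⟫ =
      (1 / 2) * bdf2GNormSq x y - (1 / 2) * bdf2GNormSq y z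
        + (1 / 2) * ‖x - (2 : ℝ) • y + z‖ ^ 2 := by
  simp only [bdf2GNormSq, ← real_inner_self_eq_norm_sq, inner_add_left, inner_add_right,
    inner_sub_left, inner_sub_right, real_inner_smul_left, real_inner_smul_right,
    real_inner_comm y x, real_inner_comm z x, real_inner_comm z y]
  ring

theorem bdf2GNormSq_sub_le_two_mul_inner (x y z : H) :
    bdf2GNormSq x y - bdf2GNormSq y z ≤ 2 * ⟪(3 : ℝ) • x - (4 : ℝ) • y + z, x⟫ := by
  rw [inner_bdf2_self_eq]
  linarith [sq_nonneg ‖x - (2 : ℝ) • y + z‖]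

theorem bdf2_energy_step {x y z f : H} {A c ν Δt : ℝ} (hν : 0 < ν) (hΔt : 0 < Δt) (hA : 0 ≤ A)
    (heq : (2 * Δt)⁻¹ * ⟪(3 : ℝ) • x - (4 : ℝ) • y + z, x⟫ + ν * A = ⟪f, x⟫)
    (hf : ⟪f, x⟫ ≤ c * √A) :
    bdf2GNormSq x y + 2 * ν * Δt * A ≤ bdf2GNormSq y z + 2 * ν⁻¹ * Δt * c ^ 2 := by
  have hinner : ⟪(3 : ℝ) • x - (4 : ℝ) • y + z, x⟫ = 2 * Δt * (⟪f, x⟫ - ν * A) := by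
    rw [← heq]
    field_simp
    ring
  have hforce : ⟪f, x⟫ - ν * A ≤ c ^ 2 / (2 * ν) - ν / 2 * A := by
    have hyoung := mul_le_half_mul_sq_add_sq_div hν c √A
    rw [Real.sq_sqrt hA] at hyoung
    linarith
  have hG := bdf2GNormSq_sub_le_two_mul_inner x y z
  rw [hinner] at hG
  have hscaled : 4 * Δt * (⟪f, x⟫ - ν * A) ≤ 4 * Δt * (c ^ 2 / (2 * ν) - ν / 2 * A) :=
    mul_le_mul_of_nonneg_left hforce (by positivity)
  have hrhs : 4 * Δt * (c ^ 2 / (2 * ν) - ν / 2 * A) = 2 * ν⁻¹ * Δt * c ^ 2 - 2 * ν * Δt * A := by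
    field_simp
    ring
  linarith

end GStability

theorem telescope_le_of_step {E d g : ℕ → ℝ} {n : ℕ}
    (hstep : ∀ k, 1 ≤ k → k ≤ n → E (k + 1) + d k ≤ E k + g k) :
    E (n + 1) + ∑ k ∈ Icc 1 n, d k ≤ E 1 + ∑ k ∈ Icc 1 n, g k := by
  induction n with
  | zero => simp
  | succ n ih =>
    have hprev := ih fun k hk1 hkn => hstep k hk1 (hkn.trans n.le_succ)
    have hlast := hstep (n + 1) le_add_self le_rfl
    rw [sum_Icc_succ_top le_add_self, sum_Icc_succ_top le_add_self]
    linarith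

/-- Here `a(·,·)` plays the role of the gradient pairing `(∇·,∇·)`, `b` is the skew-symmetric
trilinear form, `D` is the composition of the van Cittert operator with the ROM filter, and
`fdual k` is the dual norm `‖f_k‖_{-1}` with respect to `‖∇·‖ = √(a(·,·))`. -/
theorem bdf2_adl_rom_stability_general {H : Type*} [NormedAddCommGroup H]
    [InnerProductSpace ℝ H]
    (X : Submodule ℝ H)
    (a : LinearMap.BilinForm ℝ H) (b : H → H → H → ℝ)
    (D : H → H) (u f : ℕ → H) (fdual : ℕ → ℝ) (ν Δt : ℝ) (K : ℕ)
    (hν : 0 < ν) (hΔt : 0 < Δt) (hK : 1 ≤ K)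
    (hu : ∀ k, u k ∈ X)
    (ha_pos : ∀ v, 0 ≤ a v v)
    (hb : ∀ w v, b w v v = 0)
    (hfdual : ∀ k, ∀ v ∈ X, ⟪f k, v⟫ ≤ fdual k * Real.sqrt (a v v))
    (hscheme : ∀ k, 1 ≤ k → k ≤ K - 1 → ∀ v ∈ X,
      (2*Δt)⁻¹ * ⟪(3:ℝ) • u (k+1) - (4:ℝ) • u k + u (k-1), v⟫
        + ν * a (u (k+1)) v + b (D (u (k+1))) (u (k+1)) v = ⟪f (k+1), v⟫) :
    ‖u K‖^2 + 2 * ν * Δt * ∑ k ∈ Icc 1 (K-1), a (u (k+1)) (u (k+1)) ≤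
      ‖u 1‖^2 + ‖(2:ℝ) • u 1 - u 0‖^2
        + 2 * ν⁻¹ * Δt * ∑ k ∈ Icc 1 (K-1), (fdual (k+1))^2 := by
  have hstep : ∀ k, 1 ≤ k → k ≤ K - 1 →
      bdf2GNormSq (u (k + 1)) (u k) + 2 * ν * Δt * a (u (k + 1)) (u (k + 1)) ≤
        bdf2GNormSq (u k) (u (k - 1)) + 2 * ν⁻¹ * Δt * fdual (k + 1) ^ 2 := by
    intro k hk1 hkK
    have heq := hscheme k hk1 hkK (u (k + 1)) (hu _)
    rw [hb, add_zero] at heq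
    exact bdf2_energy_step hν hΔt (ha_pos _) heq (hfdual _ _ (hu _))
  have htel := telescope_le_of_step (E := fun k => bdf2GNormSq (u k) (u (k - 1))) hstep
  rw [Nat.sub_add_cancel hK, ← mul_sum, ← mul_sum] at htel
  simp only [bdf2GNormSq, Nat.sub_self] at htel
  linarith [sq_nonneg ‖(2 : ℝ) • u K - u (K - 1)‖]

/-- Unconditional stability of the BDF2 ADL-ROM scheme. Here `a(·,·)` plays the
role of the gradient pairing `(∇·,∇·)`, `b` is the skew-symmetric trilinear
form (with `b(w,v,v) = 0`), `D` is the composition of the van Cittert operator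
with the ROM filter, and `fdual k` is the dual norm `‖f_k‖_{-1}` with respect
to `‖∇·‖ = √(a(·,·))`. -/
theorem bdf2_adl_rom_stability {H : Type*} [NormedAddCommGroup H]
    [InnerProductSpace ℝ H]
    (X : Submodule ℝ H) [FiniteDimensional ℝ X]
    (a : LinearMap.BilinForm ℝ H) (b : H → H → H → ℝ)
    (D : H → H) (u f : ℕ → H) (fdual : ℕ → ℝ) (ν Δt : ℝ) (K : ℕ)
    (hν : 0 < ν) (hΔt : 0 < Δt) (hK : 1 ≤ K)
    (hu : ∀ k, u k ∈ X)
    (ha_pos : ∀ v, 0 ≤ a v v)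
    (hb : ∀ w v, b w v v = 0)
    (hfdual_nonneg : ∀ k, 0 ≤ fdual k)
    (hfdual : ∀ k, ∀ v ∈ X, ⟪f k, v⟫ ≤ fdual k * Real.sqrt (a v v))
    (hscheme : ∀ k, 1 ≤ k → k ≤ K - 1 → ∀ v ∈ X,
      (2*Δt)⁻¹ * ⟪(3:ℝ) • u (k+1) - (4:ℝ) • u k + u (k-1), v⟫
        + ν * a (u (k+1)) v + b (D (u (k+1))) (u (k+1)) v = ⟪f (k+1), v⟫) :
    ‖u K‖^2 + 2 * ν * Δt * ∑ k ∈ Icc 1 (K-1), a (u (k+1)) (u (k+1)) ≤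
      ‖u 1‖^2 + ‖(2:ℝ) • u 1 - u 0‖^2
        + 2 * ν⁻¹ * Δt * ∑ k ∈ Icc 1 (K-1), (fdual (k+1))^2 :=
  bdf2_adl_rom_stability_general X a b D u f fdual ν Δt K hν hΔt hK hu ha_pos hb hfdual hscheme
end
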